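/- Let Γ₁, Γ₂, Γ₃ ∈ ℝ and define the linear map T : ℝ³ × ℝ³ → ℝ³ × ℝ³ by T(z₁,z₂,z₃,φ₁,φ₂,φ₃) = (q₁,q₂,q₃,p₁,p₂,p₃), where q₁ = Γ₁z₁ − Γ₃z₃, q₂ = Γ₁z₁ − Γ₂z₂, q₃ = Γ₁z₁ + Γ₂z₂ + Γ₃z₃, p₁ = (φ₁ + φ₂ − 2φ₃)/3, p₂ = (φ₁ − 2φ₂ + φ₃)/3, p₃ = (φ₁ + φ₂ + φ₃)/3. Then T intertwines the weighted symplectic bilinear form with the standard one: for all u = (z,φ), u' = (z',φ') in ℝ⁶, Σᵢ₌₁³ (qᵢ(u) pᵢ(u') − qᵢ(u') pᵢ(u)) = Σᵢ₌₁³ Γᵢ (zᵢ φ'ᵢ − z'ᵢ φᵢ); equivalently, dq₁∧dp₁ + dq₂∧dp₂ + dq₃∧dp₃ = Γ₁ dz₁∧dφ₁ + Γ₂ dz₂∧dφ₂ + Γ₃ dz₃∧dφ₃, so T is a canonical (symplectic) change of coordinates for the three-vortex problem. -/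
import Mathlib


open Real

/-- The reduced momentum-type coordinates `q₁ = Γ₁z₁ − Γ₃z₃`, `q₂ = Γ₁z₁ − Γ₂z₂`,
`q₃ = Γ₁z₁ + Γ₂z₂ + Γ₃z₃` of the three-vortex problem. -/
def qCoord (Γ z : Fin 3 → ℝ) : Fin 3 → ℝ :=
  ![Γ 0 * z 0 - Γ 2 * z 2, Γ 0 * z 0 - Γ 1 * z 1, Γ 0 * z 0 + Γ 1 * z 1 + Γ 2 * z 2]

/-- The reduced angle-type coordinates `p₁ = (φ₁+φ₂−2φ₃)/3`, `p₂ = (φ₁−2φ₂+φ₃)/3`,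
`p₃ = (φ₁+φ₂+φ₃)/3` of the three-vortex problem. -/
noncomputable def pCoord (φ : Fin 3 → ℝ) : Fin 3 → ℝ :=
  ![(φ 0 + φ 1 - 2 * φ 2) / 3, (φ 0 - 2 * φ 1 + φ 2) / 3, (φ 0 + φ 1 + φ 2) / 3]

/-- The change of coordinates
`T(z,φ) = (q(z), p(φ))` intertwines the weighted symplectic bilinear form with the
standard one: for all `u = (z,φ)`, `u' = (z',φ')`,
`Σᵢ (qᵢ(u) pᵢ(u') − qᵢ(u') pᵢ(u)) = Σᵢ Γᵢ (zᵢ φ'ᵢ − z'ᵢ φᵢ)`; equivalently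
`dq₁∧dp₁ + dq₂∧dp₂ + dq₃∧dp₃ = Γ₁ dz₁∧dφ₁ + Γ₂ dz₂∧dφ₂ + Γ₃ dz₃∧dφ₃`, so `T` is a
canonical (symplectic) change of coordinates for the three-vortex problem. -/
theorem three_vortex_canonical_change
    (Γ : Fin 3 → ℝ) (z φ z' φ' : Fin 3 → ℝ) :
    ∑ i : Fin 3, (qCoord Γ z i * pCoord φ' i - qCoord Γ z' i * pCoord φ i)
      = ∑ i : Fin 3, Γ i * (z i * φ' i - z' i * φ i) := by
  simp [qCoord, pCoord, Fin.sum_univ_three]; ring
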